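/- arXiv:hep-th/0312328 — 5 statements merged into one kernel-verified Lean document; each statement's English description precedes it below -/
import Mathlib

section
/- Let a, b be real numbers with a ≠ 0. Then in the algebra of 2×2 real matrices, exp(A) * exp(N) = exp(M), where A = ![![a,0],![0,0]], N = ![![0,b],![0,0]], and M = ![![a, a*b/(1 - exp(-a))],![0,0]]. (This is the matrix form of the κ-Minkowski reordering identity e^{-i q x} e^{i q₀ t} = exp(i q₀ t - i q x · λq₀/(1-e^{-λq₀})).) -/
/-!
Writing `!![a, c; 0, 0] = a • P` with `P = !![1, c / a; 0, 0]` idempotent gives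
`exp !![a, c; 0, 0] = 1 + (eᵃ - 1) • P`, while `!![0, b; 0, 0]` squares to zero. Both sides of the
identity are then `!![eᵃ, eᵃ b; 0, 1]`, because `(1 - e⁻ᵃ) eᵃ = eᵃ - 1`.
-/

open NormedSpace

section

variable {𝔸 : Type*} [Ring 𝔸] [TopologicalSpace 𝔸] [IsTopologicalRing 𝔸]

theorem exp_eq_one_add_of_sq_eq_zero [Algebra ℚ 𝔸] {x : 𝔸} (hx : x ^ 2 = 0) : exp x = 1 + x := by
  simp only [exp_eq_tsum_rat]
  rw [tsum_eq_sum (s := Finset.range 2)]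
  · simp [Finset.sum_range_succ]
  · intro n hn
    rw [pow_eq_zero_of_le (show 1 < n by simpa using hn) hx, smul_zero]

theorem IsIdempotentElem.exp_smul [Algebra ℝ 𝔸] [T2Space 𝔸] [ContinuousSMul ℝ 𝔸] {p : 𝔸}
    (hp : IsIdempotentElem p) (t : ℝ) :
    exp (t • p) = 1 + (Real.exp t - 1) • p := by
  have hterm : ∀ n : ℕ, ((n.factorial : ℝ)⁻¹) • (t • p) ^ n
      = ((n.factorial : ℝ)⁻¹ • t ^ n) • p + if n = 0 then 1 - p else 0 := by
    rintro (_ | n)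
    · simp
    · simp [smul_pow, hp.pow_succ_eq, smul_smul]
  have hseries : HasSum (fun n : ℕ => ((n.factorial : ℝ)⁻¹) • (t • p) ^ n)
      (Real.exp t • p + (1 - p)) := by
    simp_rw [hterm]
    exact ((Real.exp_eq_exp_ℝ ▸ exp_series_hasSum_exp' (𝕂 := ℝ) t).smul_const p).add
      (hasSum_ite_eq 0 (1 - p))
  simp only [exp_eq_tsum ℝ]
  rw [hseries.tsum_eq, sub_smul, one_smul]
  abel

end

namespace Matrix

theorem exp_fin_two_strictUpper (b : ℝ) :
    exp !![0, b; 0, 0] = !![1, b; 0, 1] := by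
  have hsq : !![0, b; 0, 0] ^ 2 = 0 := by
    ext i j
    fin_cases i <;> fin_cases j <;> simp [sq]
  rw [exp_eq_one_add_of_sq_eq_zero hsq]
  ext i j
  fin_cases i <;> fin_cases j <;> simp

theorem exp_fin_two_of_lowerRow_zero {a : ℝ} (ha : a ≠ 0) (c : ℝ) :
    exp !![a, c; 0, 0] = !![Real.exp a, c * (Real.exp a - 1) / a; 0, 1] := by
  have hidem : IsIdempotentElem !![1, c / a; 0, 0] := by
    rw [IsIdempotentElem, mul_fin_two]
    simp
  have hsmul : !![a, c; 0, 0] = a • !![1, c / a; 0, 0] := by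
    ext i j
    fin_cases i <;> fin_cases j <;> simp [mul_div_cancel₀ c ha]
  rw [hsmul, hidem.exp_smul]
  ext i j
  fin_cases i <;> fin_cases j <;> simp
  ring

end Matrix

theorem stmt0 (a b : ℝ) (ha : a ≠ 0) :
    NormedSpace.exp (!![a, 0; 0, 0] : Matrix (Fin 2) (Fin 2) ℝ) *
      NormedSpace.exp (!![0, b; 0, 0] : Matrix (Fin 2) (Fin 2) ℝ) =
    NormedSpace.exp
      (!![a, a * b / (1 - Real.exp (-a)); 0, 0] : Matrix (Fin 2) (Fin 2) ℝ) := by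
  have hcorner : a * b / (1 - Real.exp (-a)) * (Real.exp a - 1) / a = Real.exp a * b := by
    have hexp : Real.exp a - 1 ≠ 0 := sub_ne_zero.mpr (mt (Real.exp_eq_one_iff a).mp ha)
    rw [Real.exp_neg]
    field_simp
  rw [Matrix.exp_fin_two_of_lowerRow_zero ha, Matrix.exp_fin_two_of_lowerRow_zero ha,
    Matrix.exp_fin_two_strictUpper, hcorner]
  simp
end

section
/- Let 𝔸 be a complete normed ring that is also a normed algebra over ℝ (or ℂ), and let A, B ∈ 𝔸. Set C = A*B - B*A. If C commutes with both A and B, then exp(A) * exp(B) = exp(A + B) * exp(C/2). -/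
/-!
Since `C` commutes with `A`, conjugation by `exp (t • A)` shifts `B` to `B + t • C`
(the series `exp (ad (t • A)) B` stops after its linear term). Hence
`F t = exp (t • A) * exp (t • B)` solves `F' = (A + B + t • C) * F`, `F 0 = 1`. As `C` is central
in the algebra generated by `A` and `B`, the product of `F t` with the inverse
`exp (-(t ^ 2 / 2) • C) * exp (t • -(A + B))` of the expected value has zero derivative,
so it is constantly `1`; take `t = 1`.
-/

open NormedSpace

section

variable {𝔸 : Type*} [NormedRing 𝔸] [NormedAlgebra ℝ 𝔸] [CompleteSpace 𝔸]

theorem exp_mul_exp_neg (x : 𝔸) : exp x * exp (-x) = 1 := by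
  let : NormedAlgebra ℚ 𝔸 := .restrictScalars ℚ ℝ 𝔸
  rw [← exp_add_of_commute (Commute.refl x).neg_right, add_neg_cancel, exp_zero]

theorem exp_neg_mul_exp (x : 𝔸) : exp (-x) * exp x = 1 := by
  simpa using exp_mul_exp_neg (-x)

theorem exp_smul_mul_eq_of_commute_commutator {X Y D : 𝔸} (hD : X * Y - Y * X = D)
    (hDX : Commute D X) (s : ℝ) : exp (s • X) * Y = (Y + s • D) * exp (s • X) := by
  have hconj (u : ℝ) :
      HasDerivAt (fun u : ℝ => exp (u • X) * Y * exp (u • -X) - u • D) 0 u := by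
    refine ((((hasDerivAt_exp_smul_const X u).mul_const Y).mul
      (hasDerivAt_exp_smul_const' (-X) u)).sub ((hasDerivAt_id u).smul_const D)).congr_deriv ?_
    have hDE : Commute D (exp (u • X)) := (hDX.smul_right u).exp_right
    calc _ = exp (u • X) * (X * Y - Y * X) * exp (u • -X) - D := by
          simp only [one_smul]; noncomm_ring
      _ = D * (exp (u • X) * exp (-(u • X))) - D := by rw [hD, ← hDE.eq, mul_assoc, smul_neg]
      _ = 0 := by rw [exp_mul_exp_neg, mul_one, sub_self]
  have hconst := is_const_of_deriv_eq_zero (fun u => (hconj u).differentiableAt)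
    (fun u => (hconj u).deriv) s 0
  simp only [zero_smul, exp_zero, one_mul, mul_one, sub_zero] at hconst
  calc exp (s • X) * Y = exp (s • X) * Y * exp (s • -X) * exp (s • X) := by
        rw [mul_assoc _ (exp _), smul_neg, exp_neg_mul_exp, mul_one]
    _ = (Y + s • D) * exp (s • X) := by rw [← sub_eq_iff_eq_add.mp hconst]

theorem hasDerivAt_exp_smul_mul_exp_smul {A B C : 𝔸} (hC : A * B - B * A = C)
    (hCA : Commute C A) (t : ℝ) :
    HasDerivAt (fun t : ℝ => exp (t • A) * exp (t • B))
      ((A + B + t • C) * (exp (t • A) * exp (t • B))) t := by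
  refine ((hasDerivAt_exp_smul_const' A t).mul (hasDerivAt_exp_smul_const' B t)).congr_deriv ?_
  rw [← mul_assoc (exp _) B, exp_smul_mul_eq_of_commute_commutator hC hCA]
  noncomm_ring

theorem exp_smul_mul_exp_smul_of_commute_commutator {A B C : 𝔸} (hC : A * B - B * A = C)
    (hCA : Commute C A) (hCB : Commute C B) (t : ℝ) :
    exp (t • A) * exp (t • B) = exp (t • (A + B)) * exp ((t ^ 2 / 2) • C) := by
  set S := A + B
  have hP (t : ℝ) : HasDerivAt (fun t : ℝ => exp (t • -S) * (exp (t • A) * exp (t • B)))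
      (t • (C * (exp (t • -S) * (exp (t • A) * exp (t • B))))) t := by
    refine ((hasDerivAt_exp_smul_const' (-S) t).mul
      (hasDerivAt_exp_smul_mul_exp_smul hC hCA t)).congr_deriv ?_
    have hSC : Commute S C := (hCA.add_right hCB).symm
    have hES : Commute (exp (t • -S)) (S + t • C) :=
      (((Commute.refl S).neg_left.add_right (hSC.neg_left.smul_right t)).smul_left t).exp_left
    rw [← mul_assoc (exp _) (S + t • C), hES.eq]
    simp only [add_mul, smul_mul_assoc, neg_mul, mul_assoc]
    abel
  have hw (t : ℝ) : HasDerivAt (fun t : ℝ => exp ((-(t ^ 2 / 2)) • C) *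
      (exp (t • -S) * (exp (t • A) * exp (t • B)))) 0 t := by
    have hq : HasDerivAt (fun t : ℝ => -(t ^ 2 / 2)) (-t) t :=
      ((hasDerivAt_pow 2 t).div_const 2).neg.congr_deriv (by push_cast; ring)
    refine (((hasDerivAt_exp_smul_const' C _).scomp t hq).mul (hP t)).congr_deriv ?_
    have hEC : Commute (exp ((-(t ^ 2 / 2)) • C)) C := ((Commute.refl C).smul_left _).exp_left
    rw [Function.comp_apply, mul_smul_comm, ← mul_assoc (exp _) C, hEC.eq, smul_mul_assoc,
      neg_smul, mul_assoc, neg_add_cancel]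
  have hw_eq_one := is_const_of_deriv_eq_zero (fun u => (hw u).differentiableAt)
    (fun u => (hw u).deriv) t 0
  simp only [zero_smul, exp_zero, one_mul, ne_eq, OfNat.ofNat_ne_zero, not_false_eq_true,
    zero_pow, zero_div, neg_zero] at hw_eq_one
  rw [← mul_one (exp (t • S) * _), ← hw_eq_one, neg_smul, smul_neg, mul_assoc,
    ← mul_assoc (exp ((t ^ 2 / 2) • C)), exp_mul_exp_neg, one_mul, ← mul_assoc, exp_mul_exp_neg,
    one_mul]

end

theorem stmt1 {𝔸 : Type*} [NormedRing 𝔸] [NormedAlgebra ℝ 𝔸] [CompleteSpace 𝔸]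
    (A B : 𝔸) (C : 𝔸) (hC : C = A * B - B * A)
    (hCA : Commute C A) (hCB : Commute C B) :
    NormedSpace.exp A * NormedSpace.exp B =
      NormedSpace.exp (A + B) * NormedSpace.exp ((2 : ℝ)⁻¹ • C) := by
  simpa using exp_smul_mul_exp_smul_of_commute_commutator hC.symm hCA hCB 1
end

section
/- Let V be a real vector space, B : V → V → ℝ an antisymmetric bilinear form (B v w = - B w v), and k : Fin n → V a family of vectors with ∑ i, k i = 0. Define S(k) = ∑ over pairs i < j of B (k i) (k j). Then S is invariant under cyclic permutation of the family: S(k ∘ cycle) = S(k), where cycle sends i to i+1 mod n. -/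
theorem stmt7 {V : Type*} [AddCommGroup V] [Module ℝ V]
    (B : V →ₗ[ℝ] V →ₗ[ℝ] ℝ) (hB : ∀ v w, B v w = -B w v)
    (n : ℕ) (k : Fin n → V) (hk : ∑ i, k i = 0) :
    (∑ i : Fin n, ∑ j : Fin n,
        if i < j then B ((k ∘ finRotate n) i) ((k ∘ finRotate n) j) else 0) =
      ∑ i : Fin n, ∑ j : Fin n, if i < j then B (k i) (k j) else 0 := by
  cases n with
  | zero => simp
  | succ m =>
  classical
  set σ := finRotate (m + 1) with hσ
  have hσlast : σ (Fin.last m) = 0 := by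
    simp [hσ, finRotate_succ_apply, Fin.last_add_one]
  have hre : ∀ f : Fin (m + 1) → ℝ, ∑ i, f (σ i) = ∑ i, f i := fun f =>
    Equiv.sum_comp σ f
  -- sum over the erase of last
  have hk0 : ∑ i ∈ Finset.univ.erase (Fin.last m), k (σ i) = -k 0 := by
    have h1 : ∑ i, k (σ i) = 0 := by rw [Equiv.sum_comp σ (fun i => k i)]; exact hk
    have h2 : k (σ (Fin.last m)) + ∑ i ∈ Finset.univ.erase (Fin.last m), k (σ i)
        = ∑ i, k (σ i) := Finset.add_sum_erase Finset.univ (fun i => k (σ i))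
      (Finset.mem_univ (Fin.last m))
    rw [hσlast] at h2
    rw [← h2] at h1
    exact eq_neg_of_add_eq_zero_right h1
  -- reindex the RHS
  have hrhs : (∑ i : Fin (m+1), ∑ j : Fin (m+1), if i < j then B (k i) (k j) else 0)
      = ∑ i : Fin (m+1), ∑ j : Fin (m+1),
          if σ i < σ j then B (k (σ i)) (k (σ j)) else 0 := by
    rw [← Equiv.sum_comp σ (fun i => ∑ j : Fin (m+1), if i < j then B (k i) (k j) else 0)]
    refine Finset.sum_congr rfl fun i _ => ?_
    rw [← Equiv.sum_comp σ (fun j => if σ i < j then B (k (σ i)) (k j) else 0)]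
  rw [hrhs]
  -- termwise comparison
  have key : ∀ i j : Fin (m + 1),
      (if i < j then B (k (σ i)) (k (σ j)) else 0)
      = (if σ i < σ j then B (k (σ i)) (k (σ j)) else 0)
        - (if i = Fin.last m ∧ j ≠ Fin.last m then B (k (σ i)) (k (σ j)) else 0)
        + (if i ≠ Fin.last m ∧ j = Fin.last m then B (k (σ i)) (k (σ j)) else 0) := by
    intro i j
    have hσj : j ≠ Fin.last m → ¬ σ i < σ j → False → True := fun _ _ h => h.elim
    by_cases h1 : i = Fin.last m
    · by_cases h2 : j = Fin.last m
      · subst h1; subst h2; simp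
      · subst h1
        have hj0 : σ j ≠ 0 := fun h => h2 (σ.injective (h.trans hσlast.symm))
        have hlt : σ (Fin.last m) < σ j := by
          rw [hσlast]; exact Fin.pos_iff_ne_zero.2 hj0
        have hnlt : ¬ Fin.last m < j := not_lt.2 (Fin.le_last j)
        simp [hlt, hnlt, h2]
    · by_cases h2 : j = Fin.last m
      · subst h2
        have hlt : i < Fin.last m := lt_of_le_of_ne (Fin.le_last i) h1
        have hnlt : ¬ σ i < σ (Fin.last m) := by rw [hσlast]; exact Fin.not_lt_zero _
        simp [hlt, hnlt, h1]
      · have hsi : (σ i).val = i.val + 1 := by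
          simp [hσ, finRotate_succ_apply, Fin.val_add_one, h1]
        have hsj : (σ j).val = j.val + 1 := by
          simp [hσ, finRotate_succ_apply, Fin.val_add_one, h2]
        have hiff : σ i < σ j ↔ i < j := by
          rw [Fin.lt_def, Fin.lt_def, hsi, hsj]; omega
        simp [hiff, h1, h2]
  calc (∑ i : Fin (m+1), ∑ j : Fin (m+1), if i < j then B ((k ∘ σ) i) ((k ∘ σ) j) else 0)
      = ∑ i : Fin (m+1), ∑ j : Fin (m+1),
          ((if σ i < σ j then B (k (σ i)) (k (σ j)) else 0)
            - (if i = Fin.last m ∧ j ≠ Fin.last m then B (k (σ i)) (k (σ j)) else 0)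
            + (if i ≠ Fin.last m ∧ j = Fin.last m then B (k (σ i)) (k (σ j)) else 0)) := by
        refine Finset.sum_congr rfl fun i _ => Finset.sum_congr rfl fun j _ => ?_
        exact key i j
    _ = (∑ i : Fin (m+1), ∑ j : Fin (m+1), if σ i < σ j then B (k (σ i)) (k (σ j)) else 0)
          - (∑ i : Fin (m+1), ∑ j : Fin (m+1),
              if i = Fin.last m ∧ j ≠ Fin.last m then B (k (σ i)) (k (σ j)) else 0)
          + (∑ i : Fin (m+1), ∑ j : Fin (m+1),
              if i ≠ Fin.last m ∧ j = Fin.last m then B (k (σ i)) (k (σ j)) else 0) := by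
        simp [Finset.sum_add_distrib, Finset.sum_sub_distrib]
    _ = ∑ i : Fin (m+1), ∑ j : Fin (m+1), if σ i < σ j then B (k (σ i)) (k (σ j)) else 0 := by
        have hC1 : (∑ i : Fin (m+1), ∑ j : Fin (m+1),
            if i = Fin.last m ∧ j ≠ Fin.last m then B (k (σ i)) (k (σ j)) else 0)
            = B (k 0) (-k 0) := by
          rw [Finset.sum_eq_single (Fin.last m)]
          · rw [hσlast]
            rw [show (∑ j : Fin (m+1),
                if Fin.last m = Fin.last m ∧ j ≠ Fin.last m then B (k 0) (k (σ j)) else 0)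
              = ∑ j ∈ Finset.univ.erase (Fin.last m), B (k 0) (k (σ j)) from ?_]
            · rw [← map_sum, hk0]
            · rw [← Finset.filter_ne', Finset.sum_filter]
              simp
          · intro b _ hb; simp [hb]
          · simp
        have hC2 : (∑ i : Fin (m+1), ∑ j : Fin (m+1),
            if i ≠ Fin.last m ∧ j = Fin.last m then B (k (σ i)) (k (σ j)) else 0)
            = B (-k 0) (k 0) := by
          have : ∀ i : Fin (m+1), (∑ j : Fin (m+1),
              if i ≠ Fin.last m ∧ j = Fin.last m then B (k (σ i)) (k (σ j)) else 0)
              = if i ≠ Fin.last m then B (k (σ i)) (k 0) else 0 := by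
            intro i
            by_cases hi : i = Fin.last m
            · simp [hi]
            · simp [hi, hσlast]
          rw [Finset.sum_congr rfl fun i _ => this i]
          rw [show (∑ i : Fin (m+1), if i ≠ Fin.last m then B (k (σ i)) (k 0) else 0)
            = ∑ i ∈ Finset.univ.erase (Fin.last m), B (k (σ i)) (k 0) from ?_]
          · rw [show (∑ i ∈ Finset.univ.erase (Fin.last m), B (k (σ i)) (k 0))
              = B (∑ i ∈ Finset.univ.erase (Fin.last m), k (σ i)) (k 0) from ?_]
            · rw [hk0]
            · rw [map_sum B _ _]; simp [LinearMap.sum_apply]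
          · rw [← Finset.filter_ne', Finset.sum_filter]
        rw [hC1, hC2]
        have h0 : B (k 0) (k 0) = 0 := by
          have := hB (k 0) (k 0); linarith
        simp [map_neg, LinearMap.neg_apply, h0]
end

section
/- Let A be an associative ℂ-algebra with unit, and x₀,...,x₃ ∈ A such that the family (1, x₀, x₁, x₂, x₃) is linearly independent over ℂ. Suppose x_μ * x_ν - x_ν * x_μ = i θ_{μν} • 1 + i ∑_α C^α_{μν} • x_α for constants θ_{μν}, C^α_{μν} ∈ ℝ. If for every a ∈ ℝ⁴ the translated elements y_μ = x_μ + a_μ • 1 satisfy the same relations (with the same θ and C), then C^α_{μν} = 0 for all α, μ, ν; i.e. the spacetime is canonical: [x_μ, x_ν] = iθ_{μν} • 1. -/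
theorem stmt10 {A : Type*} [Ring A] [Algebra ℂ A] (x : Fin 4 → A)
    (hli : LinearIndependent ℂ ![(1 : A), x 0, x 1, x 2, x 3])
    (θ : Fin 4 → Fin 4 → ℝ) (Cc : Fin 4 → Fin 4 → Fin 4 → ℝ)
    (hx : ∀ μ ν, x μ * x ν - x ν * x μ =
      (Complex.I * ((θ μ ν : ℝ) : ℂ)) • (1 : A) +
        ∑ α, (Complex.I * ((Cc α μ ν : ℝ) : ℂ)) • x α)
    (htr : ∀ a : Fin 4 → ℝ, ∀ μ ν,
      (x μ + ((a μ : ℝ) : ℂ) • (1 : A)) * (x ν + ((a ν : ℝ) : ℂ) • (1 : A)) -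
        (x ν + ((a ν : ℝ) : ℂ) • (1 : A)) * (x μ + ((a μ : ℝ) : ℂ) • (1 : A)) =
      (Complex.I * ((θ μ ν : ℝ) : ℂ)) • (1 : A) +
        ∑ α, (Complex.I * ((Cc α μ ν : ℝ) : ℂ)) • (x α + ((a α : ℝ) : ℂ) • (1 : A))) :
    ∀ α μ ν, Cc α μ ν = 0 := by
  intro α μ ν
  have hone : (1 : A) ≠ 0 := by
    have := hli.ne_zero 0
    simpa using this
  set a : Fin 4 → ℝ := fun β => if β = α then 1 else 0 with ha
  have h := htr a μ ν
  have hL : (x μ + ((a μ : ℝ) : ℂ) • (1 : A)) * (x ν + ((a ν : ℝ) : ℂ) • (1 : A)) -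
      (x ν + ((a ν : ℝ) : ℂ) • (1 : A)) * (x μ + ((a μ : ℝ) : ℂ) • (1 : A)) =
      x μ * x ν - x ν * x μ := by
    simp only [mul_add, add_mul, smul_mul_assoc, mul_smul_comm, smul_smul, smul_add, one_mul,
      mul_one]
    rw [mul_comm ((a ν : ℂ)) ((a μ : ℂ))]
    abel
  rw [hL, hx μ ν] at h
  have h2 : (∑ β, (Complex.I * ((Cc β μ ν : ℝ) : ℂ)) • (((a β : ℝ) : ℂ) • (1 : A))) = 0 := by
    have := h
    simp only [smul_add, Finset.sum_add_distrib] at this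
    linear_combination (norm := abel) -this
  simp only [smul_smul, ha] at h2
  have h3 : ((Complex.I * ((Cc α μ ν : ℝ) : ℂ)) • (1 : A)) = 0 := by
    rw [Fintype.sum_eq_single α (fun β hb => by simp [hb])] at h2
    simpa using h2
  rcases smul_eq_zero.mp h3 with hc | hc
  · have : ((Cc α μ ν : ℝ) : ℂ) = 0 :=
      (mul_eq_zero.mp hc).resolve_left Complex.I_ne_zero
    exact_mod_cast this
  · exact absurd hc hone
end

section
/- Let H be a complex inner product space, ψ ∈ H a unit vector, and A, B : H →ₗ[ℂ] H linear maps that are symmetric on H (⟨A x, y⟩ = ⟨x, A y⟩ and similarly for B). Define ⟨A⟩ = ⟨ψ, A ψ⟩, and the variances Var(A) = ‖(A - ⟨A⟩ • id) ψ‖², Var(B) = ‖(B - ⟨B⟩ • id) ψ‖². Then Var(A) * Var(B) ≥ (1/4) * ‖⟨ψ, (A*B - B*A) ψ⟩‖². -/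
/-!
Shifting symmetric operators by real scalars keeps them symmetric and leaves their commutator
unchanged. For symmetric `T`, `S` one has `⟪x, [T, S] x⟫ = ⟪T x, S x⟫ - conj ⟪T x, S x⟫`, twice
the imaginary part of `⟪T x, S x⟫`, so Cauchy–Schwarz bounds its norm by `2 ‖T x‖ ‖S x‖`.
Applied to `A - ⟨A⟩` and `B - ⟨B⟩` this is the Robertson inequality.
-/

open scoped InnerProductSpace ComplexConjugate

namespace LinearMap.IsSymmetric

variable {𝕜 E : Type*} [RCLike 𝕜] [NormedAddCommGroup E] [InnerProductSpace 𝕜 E]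
  {T S : E →ₗ[𝕜] E}

theorem conj_inner_self_apply (hT : T.IsSymmetric) (x : E) : conj ⟪x, T x⟫_𝕜 = ⟪x, T x⟫_𝕜 :=
  RCLike.conj_eq_iff_im.mpr (hT.im_inner_self_apply x)

theorem inner_commutator_apply_self (hT : T.IsSymmetric) (hS : S.IsSymmetric) (x : E) :
    ⟪x, T (S x) - S (T x)⟫_𝕜 = ⟪T x, S x⟫_𝕜 - conj ⟪T x, S x⟫_𝕜 := by
  rw [inner_sub_right, ← hT, ← hS, inner_conj_symm]

theorem norm_inner_commutator_apply_self_le (hT : T.IsSymmetric) (hS : S.IsSymmetric) (x : E) :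
    ‖⟪x, T (S x) - S (T x)⟫_𝕜‖ ≤ 2 * (‖T x‖ * ‖S x‖) :=
  calc ‖⟪x, T (S x) - S (T x)⟫_𝕜‖
      ≤ ‖⟪T x, S x⟫_𝕜‖ + ‖conj ⟪T x, S x⟫_𝕜‖ := by
        rw [hT.inner_commutator_apply_self hS]; exact norm_sub_le _ _
    _ = 2 * ‖⟪T x, S x⟫_𝕜‖ := by rw [RCLike.norm_conj, two_mul]
    _ ≤ 2 * (‖T x‖ * ‖S x‖) := by gcongr; exact norm_inner_le_norm _ _

theorem norm_inner_commutator_apply_self_le_of_real (hT : T.IsSymmetric) (hS : S.IsSymmetric)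
    {a b : 𝕜} (ha : conj a = a) (hb : conj b = b) (x : E) :
    ‖⟪x, T (S x) - S (T x)⟫_𝕜‖ ≤ 2 * (‖T x - a • x‖ * ‖S x - b • x‖) := by
  have hT' := hT.sub (IsSymmetric.id.smul ha)
  have hS' := hS.sub (IsSymmetric.id.smul hb)
  have hcomm : (T - a • id : E →ₗ[𝕜] E) ((S - b • id : E →ₗ[𝕜] E) x)
      - (S - b • id : E →ₗ[𝕜] E) ((T - a • id : E →ₗ[𝕜] E) x) = T (S x) - S (T x) := by
    simp only [sub_apply, smul_apply, id_apply, map_sub, map_smul]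
    module
  have key := hT'.norm_inner_commutator_apply_self_le hS' x
  rw [hcomm] at key
  simpa only [sub_apply, smul_apply, id_apply] using key

end LinearMap.IsSymmetric

theorem stmt14_general {H : Type*} [NormedAddCommGroup H] [InnerProductSpace ℂ H]
    (ψ : H) (A B : H →ₗ[ℂ] H)
    (hA : ∀ x y : H, (inner ℂ (A x) y : ℂ) = inner ℂ x (A y))
    (hB : ∀ x y : H, (inner ℂ (B x) y : ℂ) = inner ℂ x (B y)) :
    ‖A ψ - (inner ℂ ψ (A ψ) : ℂ) • ψ‖ ^ 2 * ‖B ψ - (inner ℂ ψ (B ψ) : ℂ) • ψ‖ ^ 2 ≥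
      (1 / 4) * ‖(inner ℂ ψ (A (B ψ) - B (A ψ)) : ℂ)‖ ^ 2 := by
  have hA' : A.IsSymmetric := hA
  have hB' : B.IsSymmetric := hB
  have key := hA'.norm_inner_commutator_apply_self_le_of_real hB'
    (hA'.conj_inner_self_apply ψ) (hB'.conj_inner_self_apply ψ) ψ
  have hsq := pow_le_pow_left₀ (norm_nonneg _) key 2
  rw [ge_iff_le]
  linarith [show (2 * (‖A ψ - ⟪ψ, A ψ⟫_ℂ • ψ‖ * ‖B ψ - ⟪ψ, B ψ⟫_ℂ • ψ‖)) ^ 2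
    = 4 * (‖A ψ - ⟪ψ, A ψ⟫_ℂ • ψ‖ ^ 2 * ‖B ψ - ⟪ψ, B ψ⟫_ℂ • ψ‖ ^ 2) by ring]

theorem stmt14 {H : Type*} [NormedAddCommGroup H] [InnerProductSpace ℂ H]
    (ψ : H) (hψ : ‖ψ‖ = 1) (A B : H →ₗ[ℂ] H)
    (hA : ∀ x y : H, (inner ℂ (A x) y : ℂ) = inner ℂ x (A y))
    (hB : ∀ x y : H, (inner ℂ (B x) y : ℂ) = inner ℂ x (B y)) :
    ‖A ψ - (inner ℂ ψ (A ψ) : ℂ) • ψ‖ ^ 2 * ‖B ψ - (inner ℂ ψ (B ψ) : ℂ) • ψ‖ ^ 2 ≥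
      (1 / 4) * ‖(inner ℂ ψ (A (B ψ) - B (A ψ)) : ℂ)‖ ^ 2 :=
  stmt14_general ψ A B hA hB
end
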